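/- Pluriharmonic jet characterization: a real formal power series in (w′, w̄′, v) lies in J𝒫 (jets of CR-pluriharmonic functions at 0 on the hyperquadric 2Re w_n = |w′|²) if and only if it can be written as Re Σ_{α,l≥0} A^l_α w′^α (|w′|² + 2iv)^l with complex coefficients A^l_α. In particular J𝒫 is a real subspace of the space of real formal power series, and J𝔈 = N₀ ⊕ J𝒫 as real vector spaces, where N₀ = {f : A_{p,q} = 0 when min(p,q)=0, and Δ′A_{1,1}=0}. -/

import Mathlib

open scoped Classical

/-- Index of the monomial `w′^α w̄′^β v^l` of a formal power series in
`(w′, w̄′, v)`, `w′ ∈ ℂ^m`: a jet is its coefficient function `Jet m → ℂ`. -/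
abbrev Jet (m : ℕ) := ((Fin m →₀ ℕ) × (Fin m →₀ ℕ) × ℕ) → ℂ

/-- Total degree of a multi-index. -/
def mdeg {m : ℕ} (a : Fin m →₀ ℕ) : ℕ := a.sum fun _ e => e

/-- `α! = Π α_i!` as a complex number. -/
noncomputable def mfact {m : ℕ} (a : Fin m →₀ ℕ) : ℂ :=
  a.prod fun _ e => (Nat.factorial e : ℂ)

/-- Coefficient of `w′^α w̄′^β v^l` in `Σ_{γ,k} A^k_γ w′^γ (t·(|w′|² + 2iv))^k`:
expanding `(|w′|² + 2iv)^k` by the binomial and multinomial theorems, the monomial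
`w′^α w̄′^β v^l` receives the contribution of `γ = α − β` (when `β ≤ α`) and
`k = |β| + l`, with coefficient `t^k · C(k,l) (2i)^l |β|!/β!`. -/
noncomputable def phCoeff {m : ℕ} (t : ℂ) (A : (Fin m →₀ ℕ) × ℕ → ℂ) : Jet m :=
  fun x =>
    if x.2.1 ≤ x.1 then
      A (x.1 - x.2.1, mdeg x.2.1 + x.2.2) * t ^ (mdeg x.2.1 + x.2.2)
        * (Nat.choose (mdeg x.2.1 + x.2.2) x.2.2 : ℂ)
        * (2 * Complex.I) ^ x.2.2
        * (Nat.factorial (mdeg x.2.1) : ℂ) / mfact x.2.1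
    else 0

/-- Coefficients of the real part `(g + ḡ)/2` of a series `g`: conjugation of a power
series swaps `α` and `β` and conjugates coefficients. -/
noncomputable def reCoeff {m : ℕ} (c : Jet m) : Jet m :=
  fun x => (c x + (starRingEnd ℂ) (c (x.2.1, x.1, x.2.2))) / 2

/-- A jet is real if its underlying power series is real-valued. -/
def IsRealJet {m : ℕ} (c : Jet m) : Prop :=
  ∀ x, (starRingEnd ℂ) (c x) = c (x.2.1, x.1, x.2.2)

/-- `J𝒫`: jets of CR-pluriharmonic functions at `0` on the hyperquadric
`2 Re w_n = |w′|²`, i.e. restrictions of real parts of holomorphic power series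
`Σ B^k_γ ξ′^γ ξ_n^k` via `ξ′ = w′`, `ξ_n = |w′|²/2 + iv`. -/
def JP (m : ℕ) : Set (Jet m) :=
  {c | ∃ B : (Fin m →₀ ℕ) × ℕ → ℂ, c = reCoeff (phCoeff (1 / 2) B)}

/-- The slice `N₀ ⊂ J𝔈`: real jets with `A_{p,q} = 0` whenever `min(p,q) = 0` and
`Δ′A_{1,1} = 0`. -/
def N0 (m : ℕ) : Set (Jet m) :=
  {c | IsRealJet c ∧
    (∀ x : (Fin m →₀ ℕ) × (Fin m →₀ ℕ) × ℕ, x.1 = 0 ∨ x.2.1 = 0 → c x = 0) ∧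
    ∀ l : ℕ, ∑ j : Fin m,
      c (Finsupp.single j 1, Finsupp.single j 1, l) = 0}

section Aux
variable {m : ℕ}

lemma mdeg_zero : mdeg (0 : Fin m →₀ ℕ) = 0 := by simp [mdeg]
lemma mfact_zero : mfact (0 : Fin m →₀ ℕ) = 1 := by simp [mfact]
lemma mdeg_single (j : Fin m) : mdeg (Finsupp.single j 1) = 1 := by
  simp [mdeg, Finsupp.sum_single_index]
lemma mfact_single (j : Fin m) : mfact (Finsupp.single j 1) = 1 := by
  simp [mfact, Finsupp.prod_single_index]
lemma mdeg_eq_zero {a : Fin m →₀ ℕ} (h : mdeg a = 0) : a = 0 := by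
  rw [mdeg, Finsupp.sum, Finset.sum_eq_zero_iff] at h
  ext j
  by_cases hj : j ∈ a.support
  · exact h j hj
  · simpa using Finsupp.notMem_support_iff.mp hj

lemma phCoeff_right_zero (t : ℂ) (A : (Fin m →₀ ℕ) × ℕ → ℂ) (α : Fin m →₀ ℕ) (l : ℕ) :
    phCoeff t A (α, 0, l) = A (α, l) * (t * (2 * Complex.I)) ^ l := by
  simp only [phCoeff]
  rw [if_pos (zero_le : (0 : Fin m →₀ ℕ) ≤ α)]
  simp only [mdeg_zero, mfact_zero, zero_add, tsub_zero, Nat.choose_self, Nat.cast_one,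
    Nat.factorial_zero, mul_one, div_one, mul_pow]
  ring

lemma phCoeff_left_zero (t : ℂ) (A : (Fin m →₀ ℕ) × ℕ → ℂ) {β : Fin m →₀ ℕ} (hβ : β ≠ 0)
    (l : ℕ) : phCoeff t A (0, β, l) = 0 := by
  simp only [phCoeff]
  exact if_neg fun h => hβ (le_antisymm h (zero_le : (0 : Fin m →₀ ℕ) ≤ β))

lemma phCoeff_diag (t : ℂ) (A : (Fin m →₀ ℕ) × ℕ → ℂ) (j : Fin m) (l : ℕ) :
    phCoeff t A (Finsupp.single j 1, Finsupp.single j 1, l)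
      = A (0, l + 1) * ((l : ℂ) + 1) * t ^ (l + 1) * (2 * Complex.I) ^ l := by
  simp only [phCoeff]
  rw [if_pos le_rfl, mdeg_single, mfact_single, tsub_self, add_comm 1 l,
    Nat.choose_succ_self_right]
  push_cast [Nat.factorial_one]
  ring

lemma phCoeff_eq_zero' (t : ℂ) (A : (Fin m →₀ ℕ) × ℕ → ℂ)
    (x : (Fin m →₀ ℕ) × (Fin m →₀ ℕ) × ℕ)
    (h : x.2.1 ≤ x.1 → A (x.1 - x.2.1, mdeg x.2.1 + x.2.2) = 0) : phCoeff t A x = 0 := by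
  simp only [phCoeff]
  split
  · rename_i hle; simp [h hle]
  · rfl

lemma phCoeff_rescale (t s : ℂ) (A : (Fin m →₀ ℕ) × ℕ → ℂ) :
    phCoeff t (fun gk => A gk * s ^ gk.2) = phCoeff (s * t) A := by
  funext x
  simp only [phCoeff]
  split
  · rw [mul_pow]; ring
  · rfl

lemma key1 (l : ℕ) : ((1:ℂ)/2 * (2 * Complex.I)) ^ l = Complex.I ^ l := by
  have h : (1:ℂ)/2 * (2 * Complex.I) = Complex.I := by ring
  rw [h]

lemma key2 (l : ℕ) :
    (-Complex.I) ^ (l+1) * ((1:ℂ)/2) ^ (l+1) * (2 * Complex.I) ^ l = -Complex.I/2 := by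
  have h : -Complex.I * ((1:ℂ)/2) * (2 * Complex.I) = 1 := by
    linear_combination (-1 : ℂ) * Complex.I_mul_I
  rw [← mul_pow, pow_succ, mul_right_comm, ← mul_pow, h, one_pow, one_mul]
  ring

lemma key3 (l : ℕ) :
    Complex.I ^ (l+1) * ((1:ℂ)/2) ^ (l+1) * (-(2 * Complex.I)) ^ l = Complex.I/2 := by
  have h : Complex.I * ((1:ℂ)/2) * -(2 * Complex.I) = 1 := by
    linear_combination (-1 : ℂ) * Complex.I_mul_I
  rw [← mul_pow, pow_succ, mul_right_comm, ← mul_pow, h, one_pow, one_mul]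
  ring

lemma key4 (l : ℕ) : ((1:ℂ)/2) ^ (l+1) * (2 * Complex.I) ^ l = Complex.I ^ l / 2 := by
  have h : (1:ℂ)/2 * (2 * Complex.I) = Complex.I := by ring
  rw [pow_succ, mul_right_comm, ← mul_pow, h]
  ring

lemma key4' (l : ℕ) : ((1:ℂ)/2) ^ (l+1) * (-(2 * Complex.I)) ^ l = (-Complex.I) ^ l / 2 := by
  have h : (1:ℂ)/2 * -(2 * Complex.I) = -Complex.I := by ring
  rw [pow_succ, mul_right_comm, ← mul_pow, h]
  ring

lemma keyNI (l : ℕ) : (-Complex.I) ^ l * Complex.I ^ l = 1 := by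
  rw [← mul_pow]
  have h : -Complex.I * Complex.I = 1 := by linear_combination (-1 : ℂ) * Complex.I_mul_I
  rw [h, one_pow]

lemma reCoeff_real (c : Jet m) : IsRealJet (reCoeff c) := by
  rintro ⟨a, b, l⟩
  simp only [reCoeff, map_div₀, map_add, Complex.conj_conj, map_ofNat]
  ring

lemma phCoeff_add_apply (t : ℂ) (A B : (Fin m →₀ ℕ) × ℕ → ℂ)
    (x : (Fin m →₀ ℕ) × (Fin m →₀ ℕ) × ℕ) :
    phCoeff t (fun gk => A gk + B gk) x = phCoeff t A x + phCoeff t B x := by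
  simp only [phCoeff]
  split
  · ring
  · ring

lemma phCoeff_sub_apply (t : ℂ) (A B : (Fin m →₀ ℕ) × ℕ → ℂ)
    (x : (Fin m →₀ ℕ) × (Fin m →₀ ℕ) × ℕ) :
    phCoeff t (fun gk => A gk - B gk) x = phCoeff t A x - phCoeff t B x := by
  simp only [phCoeff]
  split
  · ring
  · ring

lemma phCoeff_const_mul (t s : ℂ) (A : (Fin m →₀ ℕ) × ℕ → ℂ)
    (x : (Fin m →₀ ℕ) × (Fin m →₀ ℕ) × ℕ) :
    phCoeff t (fun gk => s * A gk) x = s * phCoeff t A x := by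
  simp only [phCoeff]
  split
  · ring
  · ring

end Aux

section Build
variable {m : ℕ}

noncomputable def traceSum (m : ℕ) (c : Jet m) (l : ℕ) : ℂ :=
  ∑ j : Fin m, c (Finsupp.single j 1, Finsupp.single j 1, l)

noncomputable def zB (m : ℕ) (c : Jet m) : ℕ → ℂ
  | 0 => c (0, 0, 0)
  | (k+1) => c (0, 0, k+1) + Complex.I * (2 * traceSum m c k / (m * (k+1)))

noncomputable def buildB (m : ℕ) (c : Jet m) : (Fin m →₀ ℕ) × ℕ → ℂ :=
  fun gk => if gk.1 = 0 then zB m c gk.2 * (-Complex.I) ^ gk.2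
    else 2 * c (gk.1, 0, gk.2) * (-Complex.I) ^ gk.2

variable {c : Jet m}

lemma conjT (hc : IsRealJet c) (l : ℕ) : (starRingEnd ℂ) (traceSum m c l) = traceSum m c l := by
  rw [traceSum, map_sum]
  exact Finset.sum_congr rfl fun j _ => hc _

lemma conj_z_add (hc : IsRealJet c) (l : ℕ) : zB m c l + (starRingEnd ℂ) (zB m c l) = 2 * c (0, 0, l) := by
  cases l with
  | zero =>
      have h := hc (0, 0, 0)
      simp only [zB]
      rw [h]
      ring
  | succ k =>
      have h := hc (0, 0, k+1)
      simp only [zB, map_add, map_mul, map_div₀, map_ofNat, map_natCast, map_one, Complex.conj_I,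
        conjT hc, h]
      ring

lemma conj_z_sub (hc : IsRealJet c) (k : ℕ) :
    zB m c (k+1) - (starRingEnd ℂ) (zB m c (k+1))
      = 2 * Complex.I * (2 * traceSum m c k / (m * (k+1))) := by
  have h := hc (0, 0, k+1)
  simp only [zB, map_add, map_mul, map_div₀, map_ofNat, map_natCast, map_one, Complex.conj_I,
    conjT hc, h]
  ring

/-- The pluriharmonic part matches `c` on all boundary coefficients. -/
lemma build_boundary (hc : IsRealJet c) (x : (Fin m →₀ ℕ) × (Fin m →₀ ℕ) × ℕ) (hx : x.1 = 0 ∨ x.2.1 = 0) :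
    reCoeff (phCoeff (1/2) (buildB m c)) x = c x := by
  obtain ⟨α, β, l⟩ := x
  by_cases hα : α = 0 <;> by_cases hβ : β = 0
  · subst hα; subst hβ
    simp only [reCoeff, phCoeff_right_zero, key1, buildB, if_true, if_pos rfl]
    have hzz : zB m c l * (-Complex.I) ^ l * Complex.I ^ l = zB m c l := by
      rw [mul_assoc, keyNI, mul_one]
    rw [hzz]
    linear_combination (conj_z_add hc l) / 2
  · subst hα
    simp only [reCoeff]
    rw [phCoeff_left_zero _ _ hβ, phCoeff_right_zero, key1]
    simp only [buildB, if_neg hβ]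
    have hzz : 2 * c (β, 0, l) * (-Complex.I) ^ l * Complex.I ^ l = 2 * c (β, 0, l) := by
      rw [mul_assoc, keyNI, mul_one]
    rw [hzz]
    have h : (starRingEnd ℂ) (c (β, 0, l)) = c (0, β, l) := hc (β, 0, l)
    rw [map_mul, map_ofNat, h]
    ring
  · subst hβ
    simp only [reCoeff]
    rw [phCoeff_left_zero _ _ hα, phCoeff_right_zero, key1]
    simp only [buildB, if_neg hα]
    have hzz : 2 * c (α, 0, l) * (-Complex.I) ^ l * Complex.I ^ l = 2 * c (α, 0, l) := by
      rw [mul_assoc, keyNI, mul_one]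
    rw [hzz, map_zero]
    ring
  · exact absurd hx (by simp [hα, hβ])

end Build

section Build2
variable {m : ℕ} {c : Jet m}

lemma build_trace (hc : IsRealJet c) (l : ℕ) :
    ∑ j : Fin m, reCoeff (phCoeff (1/2 : ℂ) (buildB m c)) (Finsupp.single j 1, Finsupp.single j 1, l)
      = traceSum m c l := by
  by_cases hm : m = 0
  · subst hm
    simp [traceSum]
  · have hmC : (m : ℂ) ≠ 0 := Nat.cast_ne_zero.mpr hm
    have hnC : ((l : ℂ) + 1) ≠ 0 := by
      have : ((l+1 : ℕ) : ℂ) ≠ 0 := Nat.cast_ne_zero.mpr (Nat.succ_ne_zero l)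
      push_cast at this
      exact this
    have hc0 : (starRingEnd ℂ) (c (0, 0, l+1)) = c (0, 0, l+1) := hc _
    have hv : ∀ j : Fin m,
        reCoeff (phCoeff (1/2 : ℂ) (buildB m c)) (Finsupp.single j 1, Finsupp.single j 1, l)
          = ((l : ℂ) + 1) * (2 * traceSum m c l / (m * ((l : ℂ) + 1))) / 2 := by
      intro j
      simp only [reCoeff, phCoeff_diag, buildB, if_true, if_pos rfl, zB]
      simp only [map_mul, map_add, map_div₀, map_pow, map_ofNat, map_natCast, map_one,
        map_neg, neg_neg, Complex.conj_I, conjT hc, hc0]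
      rw [show (2 : ℂ) * -Complex.I = -(2 * Complex.I) from by ring]
      linear_combination
        (((c (0,0,l+1) + Complex.I * (2 * traceSum m c l / (m * ((l:ℂ)+1)))) * ((l:ℂ)+1)) / 2) * key2 l
        + (((c (0,0,l+1) - Complex.I * (2 * traceSum m c l / (m * ((l:ℂ)+1)))) * ((l:ℂ)+1)) / 2) * key3 l
        + (-(traceSum m c l) * (((l:ℂ)+1) / ((m:ℂ) * ((l:ℂ)+1)))) * Complex.I_sq
    rw [Finset.sum_congr rfl fun j _ => hv j, Finset.sum_const, Finset.card_univ,
      Fintype.card_fin, nsmul_eq_mul]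
    field_simp

lemma JP_vanish (B : (Fin m →₀ ℕ) × ℕ → ℂ)
    (h0 : ∀ x, x.1 = 0 ∨ x.2.1 = 0 → reCoeff (phCoeff (1/2 : ℂ) B) x = 0)
    (htr : ∀ l, (∑ j : Fin m, reCoeff (phCoeff (1/2 : ℂ) B)
      (Finsupp.single j 1, Finsupp.single j 1, l)) = 0)
    (x : (Fin m →₀ ℕ) × (Fin m →₀ ℕ) × ℕ) : reCoeff (phCoeff (1/2 : ℂ) B) x = 0 := by
  have hB1 : ∀ (γ : Fin m →₀ ℕ), γ ≠ 0 → ∀ k, B (γ, k) = 0 := by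
    intro γ hγ k
    have h := h0 (γ, 0, k) (Or.inr rfl)
    simp only [reCoeff] at h
    rw [phCoeff_left_zero _ _ hγ, phCoeff_right_zero, key1, map_zero, add_zero] at h
    have hX : B (γ, k) * Complex.I ^ k = 0 := by linear_combination 2 * h
    rcases mul_eq_zero.mp hX with h' | h'
    · exact h'
    · exact absurd h' (pow_ne_zero _ Complex.I_ne_zero)
  obtain ⟨α, β, l⟩ := x
  by_cases hb : α = 0 ∨ β = 0
  · exact h0 _ (by simpa using hb)
  · push_neg at hb
    obtain ⟨hα, hβ⟩ := hb
    have hm : m ≠ 0 := by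
      rintro rfl
      exact hα (Subsingleton.elim _ _)
    have hmC : (m : ℂ) ≠ 0 := Nat.cast_ne_zero.mpr hm
    have hB2 : ∀ k, B (0, k + 1) = 0 := by
      intro k
      have hnC : ((k : ℂ) + 1) ≠ 0 := by
        have : ((k+1 : ℕ) : ℂ) ≠ 0 := Nat.cast_ne_zero.mpr (Nat.succ_ne_zero k)
        push_cast at this
        exact this
      have h2 := h0 (0, 0, k+1) (Or.inl rfl)
      simp only [reCoeff] at h2
      rw [phCoeff_right_zero, key1, map_mul, map_pow, Complex.conj_I, pow_succ, pow_succ] at h2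
      have h1 := htr k
      simp only [reCoeff, phCoeff_diag, map_mul, map_add, map_div₀, map_pow, map_ofNat,
        map_natCast, map_one, Complex.conj_I, Finset.sum_const, Finset.card_univ,
        Fintype.card_fin, nsmul_eq_mul] at h1
      rw [show (2 : ℂ) * -Complex.I = -(2 * Complex.I) from by ring] at h1
      have h1' := (mul_eq_zero.mp h1).resolve_left hmC
      have A0 : ((k : ℂ) + 1) * (B (0, k+1) * Complex.I ^ k
          + (starRingEnd ℂ) (B (0, k+1)) * (-Complex.I) ^ k) = 0 := by
        linear_combination 4 * h1' - (2 * ((k:ℂ)+1) * B (0, k+1)) * key4 k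
          - (2 * ((k:ℂ)+1) * (starRingEnd ℂ) (B (0, k+1))) * key4' k
      have A1 := (mul_eq_zero.mp A0).resolve_left hnC
      have A2 : Complex.I * (B (0, k+1) * Complex.I ^ k
          - (starRingEnd ℂ) (B (0, k+1)) * (-Complex.I) ^ k) = 0 := by
        linear_combination 2 * h2
      have A2' := (mul_eq_zero.mp A2).resolve_left Complex.I_ne_zero
      have X0 : B (0, k+1) * Complex.I ^ k = 0 := by linear_combination (A1 + A2') / 2
      have hone : Complex.I ^ k * (-Complex.I) ^ k = 1 := by rw [mul_comm]; exact keyNI k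
      have h' : B (0, k+1) * (Complex.I ^ k * (-Complex.I) ^ k) = 0 := by
        rw [← mul_assoc, X0, zero_mul]
      rwa [hone, mul_one] at h'
    have hzero : ∀ (a b : Fin m →₀ ℕ), b ≠ 0 → ∀ l' : ℕ,
        phCoeff (1/2 : ℂ) B (a, b, l') = 0 := by
      intro a b hbne l'
      apply phCoeff_eq_zero'
      intro hle
      show B (a - b, mdeg b + l') = 0
      by_cases hab : a - b = 0
      · rw [hab]
        have hmd : mdeg b ≠ 0 := fun h => hbne (mdeg_eq_zero h)
        obtain ⟨k, hk⟩ : ∃ k, mdeg b + l' = k + 1 := ⟨mdeg b + l' - 1, by omega⟩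
        rw [hk]
        exact hB2 k
      · exact hB1 _ hab _
    simp only [reCoeff]
    rw [hzero α β hβ l, hzero β α hα l, map_zero]
    norm_num

end Build2

/-- pluriharmonic jet characterization.  A real formal power series in
`(w′, w̄′, v)` lies in `J𝒫` if and only if it can be written as
`Re Σ_{α,l} A^l_α w′^α (|w′|² + 2iv)^l`; `J𝒫` is a real subspace of the space of real
formal power series; and `J𝔈 = N₀ ⊕ J𝒫`: every real jet decomposes uniquely as a sum of
an element of the slice `N₀` and a pluriharmonic jet. -/
theorem pluriharmonic_jets (m : ℕ) :
    (∀ c : Jet m, c ∈ JP m ↔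
      ∃ A : (Fin m →₀ ℕ) × ℕ → ℂ, c = reCoeff (phCoeff 1 A))
    ∧ (∀ c ∈ JP m, IsRealJet c)
    ∧ (∀ c ∈ JP m, ∀ d ∈ JP m, c + d ∈ JP m)
    ∧ (∀ c ∈ JP m, ∀ r : ℝ, r • c ∈ JP m)
    ∧ (∀ c : Jet m, IsRealJet c →
        ∃! p : Jet m × Jet m, p.1 ∈ N0 m ∧ p.2 ∈ JP m ∧ c = p.1 + p.2) := by
  refine ⟨?_, ?_, ?_, ?_, ?_⟩
  · intro c
    constructor
    · rintro ⟨B, rfl⟩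
      refine ⟨fun gk => B gk * (1/2 : ℂ) ^ gk.2, ?_⟩
      rw [phCoeff_rescale, mul_one]
    · rintro ⟨A, rfl⟩
      refine ⟨fun gk => A gk * (2 : ℂ) ^ gk.2, ?_⟩
      rw [phCoeff_rescale, show (2 : ℂ) * (1/2) = 1 from by norm_num]
  · rintro c ⟨B, rfl⟩
    exact reCoeff_real _
  · rintro c ⟨B1, rfl⟩ d ⟨B2, rfl⟩
    refine ⟨fun gk => B1 gk + B2 gk, ?_⟩
    funext x
    simp only [Pi.add_apply, reCoeff]
    rw [phCoeff_add_apply (1/2) B1 B2 x, phCoeff_add_apply (1/2) B1 B2 (x.2.1, x.1, x.2.2),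
      map_add]
    ring
  · rintro c ⟨B1, rfl⟩ r
    refine ⟨fun gk => (r : ℂ) * B1 gk, ?_⟩
    funext x
    simp only [Pi.smul_apply, reCoeff, Complex.real_smul]
    rw [phCoeff_const_mul (1/2) (r : ℂ) B1 x,
      phCoeff_const_mul (1/2) (r : ℂ) B1 (x.2.1, x.1, x.2.2), map_mul, Complex.conj_ofReal]
    ring
  · intro c hreal
    refine ⟨⟨fun x => c x - reCoeff (phCoeff (1/2 : ℂ) (buildB m c)) x,
      reCoeff (phCoeff (1/2 : ℂ) (buildB m c))⟩,
      ⟨⟨?_, ?_, ?_⟩, ⟨buildB m c, rfl⟩, ?_⟩, ?_⟩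
    · rintro ⟨a, b, l⟩
      have h1 : (starRingEnd ℂ) (c (a, b, l)) = c (b, a, l) := hreal _
      have h2 : (starRingEnd ℂ) (reCoeff (phCoeff (1/2 : ℂ) (buildB m c)) (a, b, l))
          = reCoeff (phCoeff (1/2 : ℂ) (buildB m c)) (b, a, l) := reCoeff_real _ _
      show (starRingEnd ℂ) (c (a,b,l) - reCoeff (phCoeff (1/2 : ℂ) (buildB m c)) (a,b,l))
        = c (b,a,l) - reCoeff (phCoeff (1/2 : ℂ) (buildB m c)) (b,a,l)
      rw [map_sub, h1, h2]
    · intro x hx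
      show c x - reCoeff (phCoeff (1/2 : ℂ) (buildB m c)) x = 0
      rw [build_boundary hreal x hx, sub_self]
    · intro l
      show (∑ j : Fin m, (c (Finsupp.single j 1, Finsupp.single j 1, l)
        - reCoeff (phCoeff (1/2 : ℂ) (buildB m c)) (Finsupp.single j 1, Finsupp.single j 1, l))) = 0
      rw [Finset.sum_sub_distrib, build_trace hreal l]
      show traceSum m c l - traceSum m c l = 0
      exact sub_self _
    · funext x
      show c x = (c x - reCoeff (phCoeff (1/2 : ℂ) (buildB m c)) x)
        + reCoeff (phCoeff (1/2 : ℂ) (buildB m c)) x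
      ring
    · rintro ⟨n', q'⟩ ⟨⟨hn'real, hn'b, hn'tr⟩, ⟨B', rfl⟩, hsum'⟩
      have hsum : ∀ x, n' x + reCoeff (phCoeff (1/2 : ℂ) B') x = c x :=
        fun x => (congrFun hsum' x).symm
      have hd : ∀ x, reCoeff (phCoeff (1/2 : ℂ) (fun gk => B' gk - buildB m c gk)) x
          = reCoeff (phCoeff (1/2 : ℂ) B') x
            - reCoeff (phCoeff (1/2 : ℂ) (buildB m c)) x := by
        intro x
        simp only [reCoeff]
        rw [phCoeff_sub_apply (1/2) B' (buildB m c) x,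
          phCoeff_sub_apply (1/2) B' (buildB m c) (x.2.1, x.1, x.2.2), map_sub]
        ring
      have h0d : ∀ x, x.1 = 0 ∨ x.2.1 = 0 →
          reCoeff (phCoeff (1/2 : ℂ) (fun gk => B' gk - buildB m c gk)) x = 0 := by
        intro x hx
        rw [hd x, build_boundary hreal x hx]
        have h1 := hsum x
        have h2 := hn'b x hx
        linear_combination h1 - h2
      have htrd : ∀ l, (∑ j : Fin m,
          reCoeff (phCoeff (1/2 : ℂ) (fun gk => B' gk - buildB m c gk))
            (Finsupp.single j 1, Finsupp.single j 1, l)) = 0 := by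
        intro l
        have hS : ∑ j : Fin m, reCoeff (phCoeff (1/2 : ℂ) B')
            (Finsupp.single j 1, Finsupp.single j 1, l) = traceSum m c l := by
          have hterm : ∀ j : Fin m, reCoeff (phCoeff (1/2 : ℂ) B')
              (Finsupp.single j 1, Finsupp.single j 1, l)
              = c (Finsupp.single j 1, Finsupp.single j 1, l)
                - n' (Finsupp.single j 1, Finsupp.single j 1, l) := by
            intro j
            linear_combination hsum (Finsupp.single j 1, Finsupp.single j 1, l)
          rw [Finset.sum_congr rfl fun j _ => hterm j, Finset.sum_sub_distrib, hn'tr l,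
            sub_zero]
          rfl
        rw [Finset.sum_congr rfl fun j _ => hd (Finsupp.single j 1, Finsupp.single j 1, l),
          Finset.sum_sub_distrib, hS, build_trace hreal l, sub_self]
      have hq : reCoeff (phCoeff (1/2 : ℂ) B')
          = reCoeff (phCoeff (1/2 : ℂ) (buildB m c)) := by
        funext x
        have h := JP_vanish _ h0d htrd x
        rw [hd x] at h
        exact sub_eq_zero.mp h
      have hn : n' = fun x => c x - reCoeff (phCoeff (1/2 : ℂ) (buildB m c)) x := by
        funext x
        have h1 := hsum x
        have h2 := congrFun hq x
        linear_combination h1 - h2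
      exact Prod.ext hn hq
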